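/- Let d ∈ {2,3}. Let (h_n) ⊂ (0,1) with h_n → 0⁺ and h_n^{−2} ∉ {λ_ℓ² : ℓ ∈ ℕ} for all n (so σ_n := σ(h_n) ∈ (0,1)); write ℓ_n := ℓ(h_n). Assume (β_n) = ((β_{n,+}, β_{n,−})) ⊂ ℂ² converges, that ρ := (−1)^{ℓ_n} is constant in n, that σ_n → σ ∈ {0,1}, and that |β_{n,+} + (−1)^σ ρ β_{n,−}|/|σ − σ_n| → ∞. Then there exist C > 1 and ν ∈ ℕ such that for all n ≥ ν: (i) the sum over integers k with k ≥ −ℓ_n and k ≠ σ of |β_{n,+} + (−1)^{ℓ_n+k} β_{n,−}|² · m_{ℓ_n+k}/(λ_{ℓ_n+k}² − h_n^{−2})² is at most C h_n^{3−d}; and (ii) ||β_{n,+} + (−1)^σ ρ β_{n,−}|² · m_{ℓ_n+σ}/(λ_{ℓ_n+σ}² − h_n^{−2})² − h_n^{3−d} |β_{n,+} + (−1)^σ ρ β_{n,−}|²/(2(d−1)(σ − σ_n)²)| ≤ C h_n^{4−d} |β_{n,+} + (−1)^σ ρ β_{n,−}|²/(σ − σ_n)². -/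

import Mathlib

open Filter

/-- The squared Laplace eigenvalue `λ_ℓ² = ℓ(ℓ+d−1)` on `S^d`, extended to integer index. -/
noncomputable def lam2 (d : ℕ) (l : ℤ) : ℝ := (l : ℝ) * ((l : ℝ) + (d : ℝ) - 1)

/-- The multiplicity `m_ℓ` (`2ℓ+1` if `d = 2`, `(ℓ+1)²` if `d = 3`), extended to integer
index. -/
noncomputable def mult (d : ℕ) (l : ℤ) : ℝ :=
  if d = 2 then 2 * (l : ℝ) + 1 else ((l : ℝ) + 1) ^ 2

/-!
With `x = ℓ + σ(h)`, so that `h⁻² = x (x + d - 1)`, the gap `λ²_{ℓ+k} - h⁻²` factors as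
`(k - σ(h)) (ℓ + k + x + d - 1)`. The second factor is at least of size `x ≈ h⁻¹`, which makes
`m_{ℓ+k} / (ℓ + k + x + d - 1)²` at most `2 h^{3-d}` for every `k`, and equal to
`h^{3-d} / (2 (d - 1)) + O(h^{4-d})` at `k = σ`. Once `|σ(h) - σ| ≤ 1/4`, the first factor is
comparable to `k - σ`, so the off-resonant terms are dominated by `∑ 1 / (k - σ)²`.
-/

lemma lam2_sub_eq_mul (d : ℕ) (l : ℤ) (x : ℝ) :
    lam2 d l - x * (x + d - 1) = (l - x) * (l + x + d - 1) := by
  unfold lam2; ring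

lemma mult_nonneg (d : ℕ) {l : ℤ} (hl : 0 ≤ l) : 0 ≤ mult d l := by
  have : (0 : ℝ) ≤ l := by exact_mod_cast hl
  unfold mult; split_ifs <;> positivity

lemma sq_mul_eq_one_of_zpow_neg_two_eq {h y : ℝ} (hh : h ≠ 0) (hy : h ^ (-2 : ℤ) = y) :
    h ^ 2 * y = 1 := by
  rw [← hy, zpow_neg, zpow_ofNat, mul_inv_cancel₀ (pow_ne_zero 2 hh)]

lemma one_le_mul_add_one_of_sq_mul_eq_one {h x c : ℝ} (hh : 0 ≤ h) (hx : 0 ≤ x) (hc : c ≤ 2)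
    (hxh : h ^ 2 * (x * (x + c)) = 1) : 1 ≤ h * (x + 1) := by
  have : 1 ≤ (h * (x + 1)) ^ 2 := by
    nlinarith [mul_nonneg (mul_nonneg hx (sq_nonneg h)) (sub_nonneg.2 hc)]
  nlinarith [mul_nonneg hh (add_nonneg hx zero_le_one)]

lemma two_mul_add_one_div_sq_le {l x h : ℝ} (hl : 0 ≤ l) (hx : 0 ≤ x) (hxh : 1 ≤ h * (x + 1)) :
    (2 * l + 1) / (l + x + 1) ^ 2 ≤ 2 * h := by
  calc (2 * l + 1) / (l + x + 1) ^ 2 ≤ 2 / (x + 1) := by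
        rw [div_le_div_iff₀ (by positivity) (by positivity)]; nlinarith [mul_nonneg hl hx]
    _ ≤ 2 * h := by rw [div_le_iff₀ (by positivity)]; linarith

lemma add_one_sq_div_sq_le {l x : ℝ} (hl : 0 ≤ l) (hx : 0 ≤ x) :
    (l + 1) ^ 2 / (l + x + 2) ^ 2 ≤ 1 :=
  div_le_one_of_le₀ (pow_le_pow_left₀ (by positivity) (by linarith) 2) (sq_nonneg _)

lemma abs_two_mul_add_one_div_sq_sub_half_le {l x h : ℝ} (hx : 0 ≤ x) (hlx : |l - x| ≤ 1 / 4)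
    (hh : 0 < h) (hxh : h ^ 2 * (x * (x + 1)) = 1) :
    |(2 * l + 1) / (l + x + 1) ^ 2 - h / 2| ≤ h ^ 2 := by
  obtain ⟨hlx₁, hlx₂⟩ := abs_le.mp hlx
  have hlx_lower : 3 * (2 * x + 1) / 4 ≤ l + x + 1 := by linarith
  have hht : 4 ≤ h ^ 2 * (2 * x + 1) ^ 2 := by nlinarith
  -- both terms are `1 / (2x+1)` up to `O(h²)`
  have hleft : |(2 * l + 1) / (l + x + 1) ^ 2 - 1 / (2 * x + 1)| ≤ h ^ 2 / 2 := by
    have hden : 9 * (2 * x + 1) ^ 2 / 16 ≤ (2 * x + 1) * (l + x + 1) ^ 2 := by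
      nlinarith [pow_le_pow_left₀ (by positivity) hlx_lower 2]
    have heq : (2 * l + 1) / (l + x + 1) ^ 2 - 1 / (2 * x + 1)
        = -(l - x) ^ 2 / ((2 * x + 1) * (l + x + 1) ^ 2) := by
      field_simp [(by linarith : l + x + 1 ≠ 0)]; ring
    rw [heq, abs_div, abs_neg, abs_of_nonneg (sq_nonneg _), abs_of_pos (by nlinarith),
      div_le_iff₀ (by nlinarith)]
    nlinarith [sq_abs (l - x), abs_nonneg (l - x)]
  have hright : |h / 2 - 1 / (2 * x + 1)| ≤ h ^ 2 / 2 := by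
    have heq : h / 2 - 1 / (2 * x + 1) = h ^ 2 / (2 * (2 * x + 1) * (h * (2 * x + 1) + 2)) := by
      field_simp; nlinarith
    rw [heq, abs_of_nonneg (by positivity)]
    exact div_le_div_of_nonneg_left (sq_nonneg h) two_pos (by nlinarith)
  rw [abs_sub_comm] at hright
  linarith [abs_sub_le ((2 * l + 1) / (l + x + 1) ^ 2) (1 / (2 * x + 1)) (h / 2)]

lemma abs_add_one_sq_div_sq_sub_quarter_le {l x h : ℝ} (hx : 0 ≤ x) (hlx : |l - x| ≤ 1 / 4)
    (hxh : 1 ≤ h * (x + 1)) :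
    |(l + 1) ^ 2 / (l + x + 2) ^ 2 - 1 / 4| ≤ h := by
  obtain ⟨hlx₁, hlx₂⟩ := abs_le.mp hlx
  have hpos : 0 < l + x + 2 := by linarith
  have hdiff : (l + 1) ^ 2 / (l + x + 2) ^ 2 - 1 / 4
      = (l - x) * (3 * l + x + 4) / (4 * (l + x + 2) ^ 2) := by
    field_simp; ring
  rw [hdiff, abs_div, abs_mul, abs_of_pos (by positivity : (0 : ℝ) < 4 * (l + x + 2) ^ 2),
    abs_of_pos (by linarith : 0 < 3 * l + x + 4), div_le_iff₀ (by positivity)]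
  have h1 : 1 ≤ h * (l + x + 2) := by nlinarith
  nlinarith [abs_nonneg (l - x)]

lemma mult_div_sq_le {d : ℕ} (hd : d = 2 ∨ d = 3) {l : ℤ} (hl : 0 ≤ l) {x h : ℝ} (hx : 0 ≤ x)
    (hh : 0 < h) (hxh : h ^ (-2 : ℤ) = x * (x + d - 1)) :
    mult d l / (l + x + d - 1) ^ 2 ≤ 2 * h ^ ((3 : ℤ) - d) := by
  have hl' : (0 : ℝ) ≤ l := by exact_mod_cast hl
  have hxh' := sq_mul_eq_one_of_zpow_neg_two_eq hh.ne' hxh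
  rcases hd with rfl | rfl
  · norm_num [mult, add_sub_assoc] at hxh' ⊢
    exact two_mul_add_one_div_sq_le hl' hx
      (one_le_mul_add_one_of_sq_mul_eq_one hh.le hx one_le_two hxh')
  · norm_num [mult, add_sub_assoc]
    exact (add_one_sq_div_sq_le hl' hx).trans one_le_two

lemma abs_mult_div_sq_sub_le {d : ℕ} (hd : d = 2 ∨ d = 3) {l : ℤ} {x h : ℝ} (hx : 0 ≤ x)
    (hlx : |l - x| ≤ 1 / 4) (hh : 0 < h) (hxh : h ^ (-2 : ℤ) = x * (x + d - 1)) :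
    |mult d l / (l + x + d - 1) ^ 2 - h ^ ((3 : ℤ) - d) / (2 * ((d : ℝ) - 1))|
      ≤ h ^ ((4 : ℤ) - d) := by
  have hxh' := sq_mul_eq_one_of_zpow_neg_two_eq hh.ne' hxh
  rcases hd with rfl | rfl
  · norm_num [mult, add_sub_assoc] at hxh' ⊢
    exact abs_two_mul_add_one_div_sq_sub_half_le hx hlx hh hxh'
  · norm_num [mult, add_sub_assoc] at hxh' ⊢
    exact abs_add_one_sq_div_sq_sub_quarter_le hx hlx
      (one_le_mul_add_one_of_sq_mul_eq_one hh.le hx le_rfl hxh')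

lemma mult_div_lam2_sub_sq_le {d : ℕ} (hd : d = 2 ∨ d = 3) {l : ℤ} (hl : 0 ≤ l) {x h : ℝ}
    (hx : 0 ≤ x) (hh : 0 < h) (hxh : h ^ (-2 : ℤ) = x * (x + d - 1)) :
    mult d l / (lam2 d l - h ^ (-2 : ℤ)) ^ 2 ≤ 2 * h ^ ((3 : ℤ) - d) / (l - x) ^ 2 := by
  rw [hxh, lam2_sub_eq_mul, mul_pow, mul_comm, ← div_div]
  exact div_le_div_of_nonneg_right (mult_div_sq_le hd hl hx hh hxh) (sq_nonneg _)

lemma abs_central_term_sub_le {d : ℕ} (hd : d = 2 ∨ d = 3) {l : ℤ} {x h : ℝ} (hx : 0 ≤ x)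
    (hlx : |l - x| ≤ 1 / 4) (hh : 0 < h) (hxh : h ^ (-2 : ℤ) = x * (x + d - 1)) {A : ℝ}
    (hA : 0 ≤ A) :
    |A * mult d l / (lam2 d l - h ^ (-2 : ℤ)) ^ 2
        - h ^ ((3 : ℤ) - d) * A / (2 * ((d : ℝ) - 1) * (l - x) ^ 2)|
      ≤ h ^ ((4 : ℤ) - d) * A / (l - x) ^ 2 := by
  have hfactor : A * mult d l / (lam2 d l - h ^ (-2 : ℤ)) ^ 2
        - h ^ ((3 : ℤ) - d) * A / (2 * ((d : ℝ) - 1) * (l - x) ^ 2)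
      = A / (l - x) ^ 2 * (mult d l / (l + x + d - 1) ^ 2
        - h ^ ((3 : ℤ) - d) / (2 * ((d : ℝ) - 1))) := by
    rw [hxh, lam2_sub_eq_mul, mul_pow]
    generalize (l : ℝ) - x = u
    generalize (l : ℝ) + x + d - 1 = v
    generalize (d : ℝ) - 1 = w
    ring
  rw [hfactor, abs_mul, abs_of_nonneg (by positivity), mul_comm, mul_div_assoc]
  exact mul_le_mul_of_nonneg_right (abs_mult_div_sq_sub_le hd hx hlx hh hxh) (by positivity)

lemma sq_int_sub_le_two_mul_sq_sub {k σ : ℤ} (hkσ : k ≠ σ) {s : ℝ} (hs : |s - σ| ≤ 1 / 4) :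
    ((k : ℝ) - σ) ^ 2 ≤ 2 * (k - s) ^ 2 := by
  have h1 : 1 ≤ |(k : ℝ) - σ| := by exact_mod_cast Int.one_le_abs (sub_ne_zero.2 hkσ)
  have h2 : |(k : ℝ) - σ| ≤ |(k : ℝ) - s| + |s - σ| := abs_sub_le _ _ _
  nlinarith [sq_abs ((k : ℝ) - σ), sq_abs ((k : ℝ) - s), abs_nonneg ((k : ℝ) - s)]

lemma off_resonant_term_le {d : ℕ} (hd : d = 2 ∨ d = 3) {L : ℕ} {k σ : ℤ} (hk : -(L : ℤ) ≤ k)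
    (hkσ : k ≠ σ) {s h : ℝ} (hs : 0 ≤ s) (hsσ : |s - σ| ≤ 1 / 4) (hh : 0 < h)
    (hxh : h ^ (-2 : ℤ) = (L + s) * (L + s + d - 1)) {A : ℝ} (hA : 0 ≤ A) :
    A * mult d (L + k) / (lam2 d (L + k) - h ^ (-2 : ℤ)) ^ 2
      ≤ 4 * A * h ^ ((3 : ℤ) - d) / (k - σ) ^ 2 := by
  have hterm := mult_div_lam2_sub_sq_le hd (l := L + k) (by omega) (by positivity) hh hxh
  have hks : ((L + k : ℤ) : ℝ) - (L + s) = k - s := by push_cast; ring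
  rw [hks] at hterm
  have hkσ' : 0 < ((k : ℝ) - σ) ^ 2 := by
    have : (k : ℝ) ≠ σ := by exact_mod_cast hkσ
    positivity
  have hcomp := sq_int_sub_le_two_mul_sq_sub hkσ hsσ
  calc A * mult d (L + k) / (lam2 d (L + k) - h ^ (-2 : ℤ)) ^ 2
      = A * (mult d (L + k) / (lam2 d (L + k) - h ^ (-2 : ℤ)) ^ 2) := mul_div_assoc _ _ _
    _ ≤ A * (2 * h ^ ((3 : ℤ) - d) / (k - s) ^ 2) := mul_le_mul_of_nonneg_left hterm hA
    _ ≤ A * (2 * (2 * h ^ ((3 : ℤ) - d)) / (k - σ) ^ 2) := by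
        refine mul_le_mul_of_nonneg_left ?_ hA
        rw [div_le_div_iff₀ (by linarith) hkσ']
        nlinarith [zpow_pos hh ((3 : ℤ) - d)]
    _ = 4 * A * h ^ ((3 : ℤ) - d) / (k - σ) ^ 2 := by ring

lemma summable_and_tsum_le_of_le_div_sq_int_sub {P : ℤ → Prop} {f : {k // P k} → ℝ} {c : ℝ}
    (hc : 0 ≤ c) (σ : ℤ) (hf0 : ∀ k, 0 ≤ f k) (hf : ∀ k, f k ≤ c / ((k : ℤ) - σ : ℝ) ^ 2) :
    Summable f ∧ ∑' k, f k ≤ c * ∑' k : ℤ, 1 / (k : ℝ) ^ 2 := by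
  have hg : HasSum (fun k : ℤ => c / ((k : ℝ) - σ) ^ 2) (c * ∑' k : ℤ, 1 / (k : ℝ) ^ 2) := by
    have h0 := ((Real.summable_one_div_int_pow.2 one_lt_two).hasSum).mul_left c
    refine ((Equiv.subRight σ).hasSum_iff.2 h0).congr_fun fun k => ?_
    simp [div_eq_mul_inv]
  have hsum : Summable f :=
    Summable.of_nonneg_of_le hf0 hf (hg.summable.comp_injective Subtype.val_injective)
  exact ⟨hsum, hasSum_le_inj _ Subtype.val_injective (fun k _ => by positivity) hf
    hsum.hasSum hg⟩

lemma norm_fst_add_neg_one_zpow_mul_snd_sq_le (p : ℂ × ℂ) (m : ℤ) :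
    ‖p.1 + (-1) ^ m * p.2‖ ^ 2 ≤ 4 * ‖p‖ ^ 2 := by
  have h : ‖p.1 + (-1) ^ m * p.2‖ ≤ 2 * ‖p‖ := by
    calc ‖p.1 + (-1) ^ m * p.2‖ ≤ ‖p.1‖ + ‖p.2‖ := by
          simpa [norm_mul, norm_zpow] using norm_add_le p.1 ((-1) ^ m * p.2)
      _ ≤ 2 * ‖p‖ := by linarith [norm_fst_le p, norm_snd_le p]
  nlinarith [norm_nonneg (p.1 + (-1) ^ m * p.2)]

theorem stmt_7_general (d : ℕ) (hd : d = 2 ∨ d = 3)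
    (h : ℕ → ℝ) (hh : ∀ n, h n ∈ Set.Ioo (0 : ℝ) 1)
    (L : ℕ → ℕ) (s : ℕ → ℝ) (hs : ∀ n, s n ∈ Set.Ico (0 : ℝ) 1)
    (heq : ∀ n, (h n) ^ (-2 : ℤ) =
      ((L n : ℝ) + s n) * ((L n : ℝ) + s n + (d : ℝ) - 1))
    (β : ℕ → ℂ × ℂ) (hβ : ∃ b : ℂ × ℂ, Tendsto β atTop (nhds b))
    (ρ : ℂ)
    (σ : ℕ)
    (hsto : Tendsto s atTop (nhds (σ : ℝ))) :
    ∃ C : ℝ, 1 < C ∧ ∃ ν : ℕ, ∀ n ≥ ν,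
      (Summable (fun k : {k : ℤ // -(L n : ℤ) ≤ k ∧ k ≠ (σ : ℤ)} =>
          ‖(β n).1 + (-1 : ℂ) ^ ((L n : ℤ) + (k : ℤ)) * (β n).2‖ ^ 2 *
            mult d ((L n : ℤ) + (k : ℤ)) /
              (lam2 d ((L n : ℤ) + (k : ℤ)) - (h n) ^ (-2 : ℤ)) ^ 2) ∧
        (∑' k : {k : ℤ // -(L n : ℤ) ≤ k ∧ k ≠ (σ : ℤ)},
          ‖(β n).1 + (-1 : ℂ) ^ ((L n : ℤ) + (k : ℤ)) * (β n).2‖ ^ 2 *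
            mult d ((L n : ℤ) + (k : ℤ)) /
              (lam2 d ((L n : ℤ) + (k : ℤ)) - (h n) ^ (-2 : ℤ)) ^ 2)
          ≤ C * (h n) ^ ((3 : ℤ) - (d : ℤ))) ∧
      |‖(β n).1 + (-1 : ℂ) ^ σ * ρ * (β n).2‖ ^ 2 *
          mult d ((L n : ℤ) + (σ : ℤ)) /
            (lam2 d ((L n : ℤ) + (σ : ℤ)) - (h n) ^ (-2 : ℤ)) ^ 2
        - (h n) ^ ((3 : ℤ) - (d : ℤ)) *
            ‖(β n).1 + (-1 : ℂ) ^ σ * ρ * (β n).2‖ ^ 2 /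
              (2 * ((d : ℝ) - 1) * ((σ : ℝ) - s n) ^ 2)|
        ≤ C * (h n) ^ ((4 : ℤ) - (d : ℤ)) *
            ‖(β n).1 + (-1 : ℂ) ^ σ * ρ * (β n).2‖ ^ 2 / ((σ : ℝ) - s n) ^ 2 := by
  obtain ⟨b, hb⟩ := hβ
  set B := ‖b‖ + 1
  have hev : ∀ᶠ n in atTop, ‖β n‖ ≤ B ∧ |s n - σ| ≤ 1 / 4 :=
    (hb.norm.eventually (eventually_le_nhds (lt_add_one _))).and
      (hsto (Metric.closedBall_mem_nhds _ (by norm_num)))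
  obtain ⟨ν, hν⟩ := eventually_atTop.1 hev
  have hBT : 0 ≤ 16 * B ^ 2 * ∑' k : ℤ, 1 / (k : ℝ) ^ 2 := by positivity
  refine ⟨16 * B ^ 2 * ∑' k : ℤ, 1 / (k : ℝ) ^ 2 + 2, by linarith, ν, fun n hn => ?_⟩
  obtain ⟨hβn, hsn⟩ := hν n hn
  have hsn' : |s n - ((σ : ℤ) : ℝ)| ≤ 1 / 4 := by exact_mod_cast hsn
  have hx : (0 : ℝ) ≤ L n + s n := by linarith [(hs n).1, (L n).cast_nonneg (α := ℝ)]
  have hh0 := (hh n).1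
  constructor
  · refine And.imp id (fun H => H.trans ?_) (summable_and_tsum_le_of_le_div_sq_int_sub
      (c := 4 * (4 * B ^ 2) * h n ^ ((3 : ℤ) - d)) (by positivity) σ (fun k => ?_) (fun k => ?_))
    · exact div_nonneg (mul_nonneg (sq_nonneg _)
        (mult_nonneg d (l := L n + k) (by have := k.2.1; omega))) (sq_nonneg _)
    · refine (off_resonant_term_le hd k.2.1 k.2.2 (hs n).1 hsn' hh0 (heq n) (sq_nonneg _)).trans ?_
      gcongr
      exact (norm_fst_add_neg_one_zpow_mul_snd_sq_le _ _).trans (by gcongr)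
    · rw [mul_right_comm]
      exact mul_le_mul_of_nonneg_right (by linarith) (zpow_pos hh0 _).le
  · have hlx : (((L n + σ : ℤ)) : ℝ) - (L n + s n) = σ - s n := by push_cast; ring
    have hcentral := abs_central_term_sub_le hd (l := L n + σ) hx
      (by rwa [hlx, abs_sub_comm]) hh0 (heq n) (sq_nonneg ‖(β n).1 + (-1 : ℂ) ^ σ * ρ * (β n).2‖)
    rw [hlx] at hcentral
    refine hcentral.trans ?_
    rw [mul_assoc _ (h n ^ _), mul_div_assoc _ (h n ^ _ * _)]
    exact le_mul_of_one_le_left (by positivity) (by linarith)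

/-- Scenario 2: with `σ_n → σ ∈ {0,1}` and
`|β_{n,+} + (−1)^σ ρ β_{n,−}|/|σ − σ_n| → ∞`, (i) the sum over `k ≥ −ℓ_n`, `k ≠ σ` of
the window terms is `≤ C h_n^{3−d}`, and (ii) the `k = σ` term matches
`h_n^{3−d} |β_{n,+} + (−1)^σ ρ β_{n,−}|²/(2(d−1)(σ−σ_n)²)` up to the stated error. -/
theorem stmt_7 (d : ℕ) (hd : d = 2 ∨ d = 3)
    (h : ℕ → ℝ) (hh : ∀ n, h n ∈ Set.Ioo (0 : ℝ) 1)
    (hto : Tendsto h atTop (nhds 0))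
    (hspec : ∀ n, ∀ l : ℕ, (h n) ^ (-2 : ℤ) ≠ lam2 d (l : ℤ))
    (L : ℕ → ℕ) (s : ℕ → ℝ) (hs : ∀ n, s n ∈ Set.Ico (0 : ℝ) 1)
    (heq : ∀ n, (h n) ^ (-2 : ℤ) =
      ((L n : ℝ) + s n) * ((L n : ℝ) + s n + (d : ℝ) - 1))
    (β : ℕ → ℂ × ℂ) (hβ : ∃ b : ℂ × ℂ, Tendsto β atTop (nhds b))
    (ρ : ℂ) (hρ : ∀ n, ρ = (-1 : ℂ) ^ (L n))
    (σ : ℕ) (hσ : σ = 0 ∨ σ = 1)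
    (hsto : Tendsto s atTop (nhds (σ : ℝ)))
    (hinf : Tendsto
      (fun n => ‖(β n).1 + (-1 : ℂ) ^ σ * ρ * (β n).2‖ / |(σ : ℝ) - s n|)
      atTop atTop) :
    ∃ C : ℝ, 1 < C ∧ ∃ ν : ℕ, ∀ n ≥ ν,
      (Summable (fun k : {k : ℤ // -(L n : ℤ) ≤ k ∧ k ≠ (σ : ℤ)} =>
          ‖(β n).1 + (-1 : ℂ) ^ ((L n : ℤ) + (k : ℤ)) * (β n).2‖ ^ 2 *
            mult d ((L n : ℤ) + (k : ℤ)) /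
              (lam2 d ((L n : ℤ) + (k : ℤ)) - (h n) ^ (-2 : ℤ)) ^ 2) ∧
        (∑' k : {k : ℤ // -(L n : ℤ) ≤ k ∧ k ≠ (σ : ℤ)},
          ‖(β n).1 + (-1 : ℂ) ^ ((L n : ℤ) + (k : ℤ)) * (β n).2‖ ^ 2 *
            mult d ((L n : ℤ) + (k : ℤ)) /
              (lam2 d ((L n : ℤ) + (k : ℤ)) - (h n) ^ (-2 : ℤ)) ^ 2)
          ≤ C * (h n) ^ ((3 : ℤ) - (d : ℤ))) ∧
      |‖(β n).1 + (-1 : ℂ) ^ σ * ρ * (β n).2‖ ^ 2 *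
          mult d ((L n : ℤ) + (σ : ℤ)) /
            (lam2 d ((L n : ℤ) + (σ : ℤ)) - (h n) ^ (-2 : ℤ)) ^ 2
        - (h n) ^ ((3 : ℤ) - (d : ℤ)) *
            ‖(β n).1 + (-1 : ℂ) ^ σ * ρ * (β n).2‖ ^ 2 /
              (2 * ((d : ℝ) - 1) * ((σ : ℝ) - s n) ^ 2)|
        ≤ C * (h n) ^ ((4 : ℤ) - (d : ℤ)) *
            ‖(β n).1 + (-1 : ℂ) ^ σ * ρ * (β n).2‖ ^ 2 / ((σ : ℝ) - s n) ^ 2 :=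
  stmt_7_general d hd h hh L s hs heq β hβ ρ σ hsto
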